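/- Suppose μ is a regular cardinal, λ > μ is inaccessible, Q = Col(μ, <λ) is the Levy collapse, and D is a normal filter on λ. Let T ∈ D⁺ and let p̄ = ⟨p_i : i ∈ T⟩ be a sequence of conditions in Q. Then there is C ∈ D such that for every i ∈ T ∩ C, p_i forces that τ_p̄ = {i : p_i ∈ G} belongs to (D^Q)⁺. -/

import Mathlib

open Set Cardinal

noncomputable section

/-! ## Normal filters on the ordinals below `lam`, positive sets, antichains,
presaturation (Baumgartner–Taylor / Gitik–Shelah) -/

/-- A normal filter on (the set of ordinals below) `lam`:  a proper,
`lam`-complete filter on `Set.Iio lam` containing all final segments and closed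
under diagonal intersections. -/
structure NormalFilterOn (lam : Ordinal.{0}) where
  sets : Set (Set Ordinal.{0})
  subset_field : ∀ A ∈ sets, A ⊆ Set.Iio lam
  superset_mem : ∀ A ∈ sets, ∀ B, B ⊆ Set.Iio lam → A ⊆ B → B ∈ sets
  inter_mem : ∀ A ∈ sets, ∀ B ∈ sets, A ∩ B ∈ sets
  tail_mem : ∀ a, a < lam → {x : Ordinal.{0} | a ≤ x ∧ x < lam} ∈ sets
  complete : ∀ b, b < lam → ∀ s : Ordinal.{0} → Set Ordinal.{0},
    (∀ i, i < b → s i ∈ sets) → {x : Ordinal.{0} | x < lam ∧ ∀ i, i < b → x ∈ s i} ∈ sets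
  diagonal : ∀ s : Ordinal.{0} → Set Ordinal.{0}, (∀ i, i < lam → s i ∈ sets) →
    {x : Ordinal.{0} | x < lam ∧ ∀ i, i < x → x ∈ s i} ∈ sets
  proper : ∅ ∉ sets

/-- `A` is `D`-positive, i.e. `A ∈ D⁺`. -/
def NormalFilterOn.pos {lam : Ordinal.{0}} (D : NormalFilterOn lam) (A : Set Ordinal.{0}) : Prop :=
  A ⊆ Set.Iio lam ∧ (Set.Iio lam \ A) ∉ D.sets

/-- `A` has cardinality at most `|c|` (it injects into the ordinals below `c`). -/
def SizeLE {α : Type*} (A : Set α) (c : Ordinal.{0}) : Prop :=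
  ∃ g : α → Ordinal.{0}, (∀ x ∈ A, g x < c) ∧ ∀ x ∈ A, ∀ y ∈ A, g x = g y → x = y

/-- `A` has cardinality less than `|c|`. -/
def SizeLT {α : Type*} (A : Set α) (c : Ordinal.{0}) : Prop :=
  ∃ b, b < c ∧ SizeLE A b

/-- `⟨A i : i < i0⟩` is a maximal antichain of `D⁺`. -/
def IsMaxAntichainSeq {lam : Ordinal.{0}} (D : NormalFilterOn lam) (i0 : Ordinal.{0})
    (A : Ordinal.{0} → Set Ordinal.{0}) : Prop :=
  (∀ i, i < i0 → D.pos (A i)) ∧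
  (∀ i, i < i0 → ∀ j, j < i0 → i ≠ j → ¬ D.pos (A i ∩ A j)) ∧
  (∀ B, D.pos B → ∃ i, i < i0 ∧ D.pos (B ∩ A i))

/-- A family of sets forming a maximal antichain of `D⁺`. -/
def IsMaxAntichainSet {lam : Ordinal.{0}} (D : NormalFilterOn lam) (S : Set (Set Ordinal.{0})) : Prop :=
  (∀ A ∈ S, D.pos A) ∧
  (∀ A ∈ S, ∀ B ∈ S, A ≠ B → ¬ D.pos (A ∩ B)) ∧
  (∀ B, D.pos B → ∃ A ∈ S, D.pos (B ∩ A))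

/-- `D` is `kappa`-presaturated (Definition 1.2):  given fewer than `kappa` many
maximal antichains of `D⁺` and a positive `B`, some positive `A* ⊆ B` meets at
most `lam` many members of each antichain positively. -/
def Presaturated {lam : Ordinal.{0}} (D : NormalFilterOn lam) (kappa : Ordinal.{0}) : Prop :=
  ∀ k0, k0 < kappa →
    ∀ (idx : Ordinal.{0} → Ordinal.{0}) (A : Ordinal.{0} → Ordinal.{0} → Set Ordinal.{0}),
      (∀ a, a < k0 → IsMaxAntichainSeq D (idx a) (A a)) →
      ∀ B, D.pos B → ∃ Astar, D.pos Astar ∧ Astar ⊆ B ∧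
        ∀ a, a < k0 → SizeLE {i : Ordinal.{0} | i < idx a ∧ D.pos (Astar ∩ A a i)} lam

/-! ## Clubs and stationary sets -/

/-- `c` is closed and unbounded in `d`. -/
def ClubIn (c : Set Ordinal.{0}) (d : Ordinal.{0}) : Prop :=
  (∀ b, b < d → ∃ i, i ∈ c ∧ b < i ∧ i < d) ∧
  (∀ x, x < d → x ≠ 0 → (∀ b, b < x → ∃ i, i ∈ c ∧ b < i ∧ i < x) → x ∈ c)

/-- `A` is stationary in `d`. -/
def StatIn (A : Set Ordinal.{0}) (d : Ordinal.{0}) : Prop :=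
  ∀ c, ClubIn c d → ∃ i, i ∈ c ∧ i ∈ A ∧ i < d

/-! ## Forcing notions, names for sets of ordinals, and the forcing relation
(dense-set semantics).  `le p q` means that `q` extends (is stronger than) `p`. -/

structure ForcingNotion where
  Cond : Type 1
  le : Cond → Cond → Prop
  le_refl : ∀ p, le p p
  le_trans : ∀ {p q r}, le p q → le q r → le p r
  one : Cond
  one_le : ∀ p, le one p

/-- A name for a set of ordinals: `σ i` is the set of conditions forcing `i ∈ σ`. -/
def SetName (P : ForcingNotion) : Type 1 := Ordinal.{0} → Set P.Cond

def IsSetName (P : ForcingNotion) (σ : SetName P) : Prop :=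
  ∀ i p q, p ∈ σ i → P.le p q → q ∈ σ i

/-- `q ⊩ i ∈ σ`. -/
def ForcesMem (P : ForcingNotion) (q : P.Cond) (σ : SetName P) (i : Ordinal.{0}) : Prop :=
  ∀ r, P.le q r → ∃ s, P.le r s ∧ s ∈ σ i

/-- `q ⊩ i ∉ σ`. -/
def ForcesNotMem (P : ForcingNotion) (q : P.Cond) (σ : SetName P) (i : Ordinal.{0}) : Prop :=
  ∀ r, P.le q r → r ∉ σ i

/-- The canonical name of a ground-model set of ordinals. -/
def groundName (P : ForcingNotion) (A : Set Ordinal.{0}) : SetName P := fun i => {_s | i ∈ A}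

/-- The name of the intersection of two names. -/
def interName (P : ForcingNotion) (σ τ : SetName P) : SetName P :=
  fun i => {s | ForcesMem P s σ i ∧ ForcesMem P s τ i}

/-- `q ⊩ σ ∈ (D^Q)⁺`, where `D^Q` is the filter that `D` generates in `V^Q`. -/
def ForcesPos {lam : Ordinal.{0}} (P : ForcingNotion) (D : NormalFilterOn lam)
    (q : P.Cond) (σ : SetName P) : Prop :=
  ∀ C ∈ D.sets, ∀ r, P.le q r → ∃ s, P.le r s ∧ ∃ i ∈ C, ForcesMem P s σ i

/-- `q ⊩ σ = ∅ mod D^Q` (equivalently `q ⊩ σ ∉ (D^Q)⁺`). -/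
def ForcesNotPos {lam : Ordinal.{0}} (P : ForcingNotion) (D : NormalFilterOn lam)
    (q : P.Cond) (σ : SetName P) : Prop :=
  ∀ r, P.le q r → ∃ s, P.le r s ∧ ∃ C ∈ D.sets, ∀ i ∈ C, ForcesNotMem P s σ i

/-- `q ⊩ σ ⊆ τ`. -/
def ForcesSubset (P : ForcingNotion) (q : P.Cond) (σ τ : SetName P) : Prop :=
  ∀ i t, P.le q t → ForcesMem P t σ i → ForcesMem P t τ i

/-- `q ⊩ σ ⊆ τ mod D^Q`. -/
def ForcesSubsetMod {lam : Ordinal.{0}} (P : ForcingNotion) (D : NormalFilterOn lam)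
    (q : P.Cond) (σ τ : SetName P) : Prop :=
  ∀ r, P.le q r → ∃ s, P.le r s ∧ ∃ C ∈ D.sets,
    ∀ i ∈ C, ∀ t, P.le s t → ForcesMem P t σ i → ForcesMem P t τ i

/-! ## Forced maximal antichains, and presaturation of `D^Q` in `V^Q` -/

/-- `q` forces that `⟨A i : i < idx⟩` is a maximal antichain of `(D^Q)⁺`. -/
def ForcedMaxAntichain {lam : Ordinal.{0}} (P : ForcingNotion) (D : NormalFilterOn lam)
    (q : P.Cond) (idx : Ordinal.{0}) (A : Ordinal.{0} → SetName P) : Prop :=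
  (∀ i, i < idx → ForcesPos P D q (A i)) ∧
  (∀ i, i < idx → ∀ j, j < idx → i ≠ j → ForcesNotPos P D q (interName P (A i) (A j))) ∧
  (∀ B : SetName P, ∀ r, P.le q r → ForcesPos P D r B →
    ∃ s, P.le r s ∧ ∃ i, i < idx ∧ ForcesPos P D s (interName P (A i) B))

/-- `D^Q` is `kappa`-presaturated in `V^Q`. -/
def ForcedPresaturated {lam : Ordinal.{0}} (P : ForcingNotion) (D : NormalFilterOn lam)
    (kappa : Ordinal.{0}) : Prop :=
  ∀ (q : P.Cond) (k0 : Ordinal.{0}), k0 < kappa →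
    ∀ (idx : Ordinal.{0} → Ordinal.{0}) (A : Ordinal.{0} → Ordinal.{0} → SetName P),
      (∀ a, a < k0 → ForcedMaxAntichain P D q (idx a) (A a)) →
      ∀ B : SetName P, ForcesPos P D q B →
        ∀ r, P.le q r → ∃ s, P.le r s ∧ ∃ Astar : SetName P,
          ForcesPos P D s Astar ∧ ForcesSubsetMod P D s Astar B ∧
          ∀ a, a < k0 → ∃ Y : Set Ordinal.{0}, SizeLE Y lam ∧
            ∀ i, i < idx a → i ∉ Y → ForcesNotPos P D s (interName P Astar (A a i))

/-! ## Completeness of forcings, names of functions, preservation of cardinals -/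

/-- `P` is `kappa`-complete (`kappa`-closed): increasing chains of length `< kappa`
have upper bounds. -/
def KappaClosed (P : ForcingNotion) (kappa : Ordinal.{0}) : Prop :=
  ∀ d, d < kappa → ∀ c : Ordinal.{0} → P.Cond,
    (∀ i j, i ≤ j → j < d → P.le (c i) (c j)) → ∃ ub, ∀ i, i < d → P.le (c i) ub

/-- `F` is (below `q`) a name of a function with domain `mu`:
`F x i` is the set of conditions forcing the value at `x` to be `i`. -/
def IsFunName (P : ForcingNotion) (q : P.Cond) (mu : Ordinal.{0})
    (F : Ordinal.{0} → Ordinal.{0} → Set P.Cond) : Prop :=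
  (∀ x i p r, p ∈ F x i → P.le p r → r ∈ F x i) ∧
  (∀ x, x < mu → ∀ r, P.le q r → ∃ s, P.le r s ∧ ∃ i, s ∈ F x i) ∧
  (∀ x i j s, s ∈ F x i → s ∈ F x j → i = j)

/-- `q` forces `F` to be a function from `mu` cofinally into `lam`. -/
def ForcesCofinalInto (P : ForcingNotion) (q : P.Cond) (mu lam : Ordinal.{0})
    (F : Ordinal.{0} → Ordinal.{0} → Set P.Cond) : Prop :=
  IsFunName P q mu F ∧ (∀ x i s, s ∈ F x i → i < lam) ∧
  (∀ b, b < lam → ∀ r, P.le q r → ∃ s, P.le r s ∧ ∃ x, x < mu ∧ ∃ i, b ≤ i ∧ s ∈ F x i)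

/-- `⊩_P "lam is regular"`. -/
def ForcesRegular (P : ForcingNotion) (lam : Ordinal.{0}) : Prop :=
  ∀ q mu F, mu < lam → ¬ ForcesCofinalInto P q mu lam F

/-- `q` forces `F` to be a surjection from `mu` onto `nu`. -/
def ForcesOnto (P : ForcingNotion) (q : P.Cond) (mu nu : Ordinal.{0})
    (F : Ordinal.{0} → Ordinal.{0} → Set P.Cond) : Prop :=
  IsFunName P q mu F ∧ (∀ x i s, s ∈ F x i → i < nu) ∧
  (∀ i, i < nu → ∀ r, P.le q r → ∃ s, P.le r s ∧ ∃ x, x < mu ∧ s ∈ F x i)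

/-- `⊩_P "nu remains a cardinal"`. -/
def PreservesCardinalForced (P : ForcingNotion) (nu : Ordinal.{0}) : Prop :=
  ∀ q mu F, mu < nu → ¬ ForcesOnto P q mu nu F

/-! ## Forced clubs and stationarity -/

/-- `q` forces the name `C` to be a club in `d`. -/
def ForcesClubIn (P : ForcingNotion) (q : P.Cond) (C : SetName P) (d : Ordinal.{0}) : Prop :=
  (∀ b, b < d → ∀ r, P.le q r → ∃ s, P.le r s ∧ ∃ i, b < i ∧ i < d ∧ ForcesMem P s C i) ∧
  (∀ x, x < d → x ≠ 0 → ∀ s, P.le q s →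
    (∀ b, b < x → ∀ t, P.le s t → ∃ u, P.le t u ∧ ∃ i, b < i ∧ i < x ∧ ForcesMem P u C i) →
    ForcesMem P s C x)

/-- `q ⊩ "σ is a stationary subset of d"`. -/
def ForcesStatIn (P : ForcingNotion) (q : P.Cond) (σ : SetName P) (d : Ordinal.{0}) : Prop :=
  ∀ r, P.le q r → ∀ C : SetName P, ForcesClubIn P r C d →
    ∃ s, P.le r s ∧ ∃ i, i < d ∧ ForcesMem P s σ i ∧ ForcesMem P s C i

/-- `q ⊩ "σ ∩ d is nonstationary in d"`. -/
def ForcesNonstatIn (P : ForcingNotion) (q : P.Cond) (σ : SetName P) (d : Ordinal.{0}) : Prop :=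
  ∀ r, P.le q r → ∃ s, P.le r s ∧ ∃ C : SetName P, ForcesClubIn P s C d ∧
    ∀ i, i < d → ∀ t, P.le s t → ¬ (ForcesMem P t σ i ∧ ForcesMem P t C i)

/-- `P` preserves stationarity of every `D`-positive set. -/
def PreservesStationarity {lam : Ordinal.{0}} (P : ForcingNotion) (D : NormalFilterOn lam) : Prop :=
  ∀ A, D.pos A → ∀ q, ForcesStatIn P q (groundName P A) lam

/-! ## The games `Gm(D,γ,a)` and `Gm⁺(D,γ,a)` of Definition 1.7 -/

def restrictPlay (f : Ordinal.{0} → Set Ordinal.{0}) (i : Ordinal.{0}) : Ordinal.{0} → Set Ordinal.{0} :=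
  fun j => if j < i then f j else ∅

/-- The move `A` is legal at stage `i` of a play `f`:  it is `D`-positive and
included mod `D` in all previous moves. -/
def LegalMove {lam : Ordinal.{0}} (D : NormalFilterOn lam) (f : Ordinal.{0} → Set Ordinal.{0})
    (i : Ordinal.{0}) (A : Set Ordinal.{0}) : Prop :=
  D.pos A ∧ ∀ j, j < i → ¬ D.pos (A \ f j)

def LegalBelow {lam : Ordinal.{0}} (D : NormalFilterOn lam) (f : Ordinal.{0} → Set Ordinal.{0})
    (i : Ordinal.{0}) : Prop :=
  ∀ j, j < i → LegalMove D f j (f j)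

/-- Player II has a winning strategy in `Gm(D,γ,a)` (player I moves at stages in `a`). -/
def IIWinsGm {lam : Ordinal.{0}} (D : NormalFilterOn lam) (γ : Ordinal.{0}) (a : Set Ordinal.{0}) : Prop :=
  ∃ S : Ordinal.{0} → (Ordinal.{0} → Set Ordinal.{0}) → Set Ordinal.{0},
    ∀ f : Ordinal.{0} → Set Ordinal.{0},
      (∀ i, i < γ → i ∉ a → f i = S i (restrictPlay f i)) →
      (∀ i, i < γ → i ∈ a → LegalBelow D f i → (∃ A, LegalMove D f i A) →
        LegalMove D f i (f i)) →
      ∀ i, i < γ → LegalBelow D f i → LegalMove D f i (f i)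

/-- Player II has a winning strategy in `Gm⁺(D,γ,a)`:  in addition the
intersection of the moves must be nonempty. -/
def IIWinsGmPlus {lam : Ordinal.{0}} (D : NormalFilterOn lam) (γ : Ordinal.{0}) (a : Set Ordinal.{0}) : Prop :=
  ∃ S : Ordinal.{0} → (Ordinal.{0} → Set Ordinal.{0}) → Set Ordinal.{0},
    ∀ f : Ordinal.{0} → Set Ordinal.{0},
      (∀ i, i < γ → i ∉ a → f i = S i (restrictPlay f i)) →
      (∀ i, i < γ → i ∈ a → LegalBelow D f i → (∃ A, LegalMove D f i A) →
        LegalMove D f i (f i)) →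
      (∀ i, i < γ → LegalBelow D f i → LegalMove D f i (f i)) ∧
      ((∀ i, i < γ → LegalMove D f i (f i)) → ∃ x, ∀ i, i < γ → x ∈ f i)

/-- Player I has a winning strategy in `Gm(D,γ,a)`. -/
def IWinsGm {lam : Ordinal.{0}} (D : NormalFilterOn lam) (γ : Ordinal.{0}) (a : Set Ordinal.{0}) : Prop :=
  ∃ S : Ordinal.{0} → (Ordinal.{0} → Set Ordinal.{0}) → Set Ordinal.{0},
    ∀ f : Ordinal.{0} → Set Ordinal.{0},
      (∀ i, i < γ → i ∈ a → f i = S i (restrictPlay f i)) →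
      (∀ i, i < γ → i ∉ a → LegalBelow D f i → (∃ A, LegalMove D f i A) →
        LegalMove D f i (f i)) →
      ∃ i, i < γ ∧ LegalBelow D f i ∧ ¬ LegalMove D f i (f i) ∧
        (i ∈ a → ¬ ∃ A, LegalMove D f i A)

/-- Player I has a winning strategy in `Gm⁺(D,γ,a)`. -/
def IWinsGmPlus {lam : Ordinal.{0}} (D : NormalFilterOn lam) (γ : Ordinal.{0}) (a : Set Ordinal.{0}) : Prop :=
  ∃ S : Ordinal.{0} → (Ordinal.{0} → Set Ordinal.{0}) → Set Ordinal.{0},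
    ∀ f : Ordinal.{0} → Set Ordinal.{0},
      (∀ i, i < γ → i ∈ a → f i = S i (restrictPlay f i)) →
      (∀ i, i < γ → i ∉ a → LegalBelow D f i → (∃ A, LegalMove D f i A) →
        LegalMove D f i (f i)) →
      (∃ i, i < γ ∧ LegalBelow D f i ∧ ¬ LegalMove D f i (f i) ∧
        (i ∈ a → ¬ ∃ A, LegalMove D f i A)) ∨
      ¬ ∃ x, ∀ i, i < γ → x ∈ f i

/-- The default set of stages at which player I moves:  `{1 + 2·i}`. -/
def oddStages : Set Ordinal.{0} := {i | ∃ j : Ordinal.{0}, i = 1 + 2 * j}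

/-! ## The games in the generic extension, rendered via names and conditions -/

def defaultPairMove (P : ForcingNotion) : P.Cond × SetName P := (P.one, fun _ => ∅)

def restrictAux (P : ForcingNotion) (g : Ordinal.{0} → P.Cond × SetName P) (i : Ordinal.{0}) :
    Ordinal.{0} → P.Cond × SetName P :=
  fun j => if j < i then g j else defaultPairMove P

/-- Legality of the decorated move `m = (condition, name)` at stage `i` of the
auxiliary play `g` interpreting the game `Gm(D^Q, …)` of `V^Q` below `q`. -/
def AuxLegal {lam : Ordinal.{0}} (P : ForcingNotion) (D : NormalFilterOn lam) (q : P.Cond)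
    (g : Ordinal.{0} → P.Cond × SetName P) (i : Ordinal.{0}) (m : P.Cond × SetName P) : Prop :=
  P.le q m.1 ∧ (∀ j, j < i → P.le (g j).1 m.1) ∧ ForcesPos P D m.1 m.2 ∧
    ∀ j, j < i → ForcesSubsetMod P D m.1 m.2 ((g j).2)

def AuxLegalBelow {lam : Ordinal.{0}} (P : ForcingNotion) (D : NormalFilterOn lam) (q : P.Cond)
    (g : Ordinal.{0} → P.Cond × SetName P) (i : Ordinal.{0}) : Prop :=
  ∀ j, j < i → AuxLegal P D q g j (g j)

/-- `q ⊩ "player II has a winning strategy in Gm(D^Q,γ,a)"`. -/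
def ForcedIIWinsGm {lam : Ordinal.{0}} (P : ForcingNotion) (D : NormalFilterOn lam)
    (γ : Ordinal.{0}) (a : Set Ordinal.{0}) (q : P.Cond) : Prop :=
  ∃ S : Ordinal.{0} → (Ordinal.{0} → P.Cond × SetName P) → P.Cond × SetName P,
    ∀ g : Ordinal.{0} → P.Cond × SetName P,
      (∀ i, i < γ → i ∉ a → g i = S i (restrictAux P g i)) →
      (∀ i, i < γ → i ∈ a → AuxLegalBelow P D q g i → (∃ m, AuxLegal P D q g i m) →
        AuxLegal P D q g i (g i)) →
      ∀ i, i < γ → AuxLegalBelow P D q g i → AuxLegal P D q g i (g i)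

/-- `q ⊩ "player II has a winning strategy in Gm⁺(D^Q,γ,a)"`. -/
def ForcedIIWinsGmPlus {lam : Ordinal.{0}} (P : ForcingNotion) (D : NormalFilterOn lam)
    (γ : Ordinal.{0}) (a : Set Ordinal.{0}) (q : P.Cond) : Prop :=
  ∃ S : Ordinal.{0} → (Ordinal.{0} → P.Cond × SetName P) → P.Cond × SetName P,
    ∀ g : Ordinal.{0} → P.Cond × SetName P,
      (∀ i, i < γ → i ∉ a → g i = S i (restrictAux P g i)) →
      (∀ i, i < γ → i ∈ a → AuxLegalBelow P D q g i → (∃ m, AuxLegal P D q g i m) →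
        AuxLegal P D q g i (g i)) →
      (∀ i, i < γ → AuxLegalBelow P D q g i → AuxLegal P D q g i (g i)) ∧
      ((∀ i, i < γ → AuxLegal P D q g i (g i)) →
        ∃ s, (∀ j, j < γ → P.le (g j).1 s) ∧ ∃ x, ∀ j, j < γ → ForcesMem P s ((g j).2) x)

/-- `q ⊩ "player I has a winning strategy in Gm(D^Q,γ,a)"`. -/
def ForcedIWinsGm {lam : Ordinal.{0}} (P : ForcingNotion) (D : NormalFilterOn lam)
    (γ : Ordinal.{0}) (a : Set Ordinal.{0}) (q : P.Cond) : Prop :=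
  ∃ S : Ordinal.{0} → (Ordinal.{0} → P.Cond × SetName P) → P.Cond × SetName P,
    ∀ g : Ordinal.{0} → P.Cond × SetName P,
      (∀ i, i < γ → i ∈ a → g i = S i (restrictAux P g i)) →
      (∀ i, i < γ → i ∉ a → AuxLegalBelow P D q g i → (∃ m, AuxLegal P D q g i m) →
        AuxLegal P D q g i (g i)) →
      ∃ i, i < γ ∧ AuxLegalBelow P D q g i ∧ ¬ AuxLegal P D q g i (g i) ∧
        (i ∈ a → ¬ ∃ m, AuxLegal P D q g i m)

/-- `q ⊩ "player I has a winning strategy in Gm⁺(D^Q,γ,a)"`. -/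
def ForcedIWinsGmPlus {lam : Ordinal.{0}} (P : ForcingNotion) (D : NormalFilterOn lam)
    (γ : Ordinal.{0}) (a : Set Ordinal.{0}) (q : P.Cond) : Prop :=
  ∃ S : Ordinal.{0} → (Ordinal.{0} → P.Cond × SetName P) → P.Cond × SetName P,
    ∀ g : Ordinal.{0} → P.Cond × SetName P,
      (∀ i, i < γ → i ∈ a → g i = S i (restrictAux P g i)) →
      (∀ i, i < γ → i ∉ a → AuxLegalBelow P D q g i → (∃ m, AuxLegal P D q g i m) →
        AuxLegal P D q g i (g i)) →
      (∃ i, i < γ ∧ AuxLegalBelow P D q g i ∧ ¬ AuxLegal P D q g i (g i) ∧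
        (i ∈ a → ¬ ∃ m, AuxLegal P D q g i m)) ∨
      ¬ ∃ s, (∀ j, j < γ → P.le (g j).1 s) ∧ ∃ x, ∀ j, j < γ → ForcesMem P s ((g j).2) x

/-! ## Systems of conditions indexed by positive sets: the principles
`(*)³`, `(*)⁴`, `(*)⁶`, `(*)⁷` -/

/-- A sequence of conditions `p̄ = ⟨p_i : i ∈ T⟩` (first component: `T`). -/
def PSeq (P : ForcingNotion) : Type 1 := Set Ordinal.{0} × (Ordinal.{0} → P.Cond)

/-- The name `τ_p̄ = {i ∈ T : p_i ∈ G}`. -/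
def tauOf (P : ForcingNotion) (x : PSeq P) : SetName P :=
  fun i => {s | i ∈ x.1 ∧ P.le (x.2 i) s}

/-- `y` extends `x` in `K`:  `T_y ⊆ T_x` and `y` is coordinatewise stronger. -/
def KLe (P : ForcingNotion) (x y : PSeq P) : Prop :=
  y.1 ⊆ x.1 ∧ ∀ i ∈ y.1, P.le (x.2 i) (y.2 i)

/-- The principle `(*)³_{D,K,Q}` of Proposition 1.10. -/
def StarThree {lam : Ordinal.{0}} (P : ForcingNotion) (D : NormalFilterOn lam)
    (K : Set (PSeq P)) (kappa : Ordinal.{0}) : Prop :=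
  (∀ x ∈ K, D.pos x.1) ∧
  (∀ x ∈ K, ¬ ForcesNotPos P D P.one (tauOf P x)) ∧
  (∀ x ∈ K, ∀ T : SetName P, IsSetName P T →
      ¬ ForcesNotPos P D P.one (interName P T (tauOf P x)) →
      ∃ y ∈ K, KLe P x y ∧ ForcesSubset P P.one (tauOf P y) T) ∧
  ((∀ d, d < kappa → ∀ c : Ordinal.{0} → PSeq P, (∀ b, b < d → c b ∈ K) →
      (∀ b b', b ≤ b' → b' < d → KLe P (c b) (c b')) →
      D.pos {i : Ordinal.{0} | i < lam ∧ ∀ b, b < d → i ∈ (c b).1} →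
      ∃ y ∈ K, ∀ b, b < d → KLe P (c b) y) ∨
   (∀ d, d < kappa → ∀ c : Ordinal.{0} → PSeq P, (∀ b, b < d → c b ∈ K) →
      (∀ b b' i, b ≤ b' → b' < d → i ∈ (c b).1 → i ∈ (c b').1 →
        P.le ((c b).2 i) ((c b').2 i)) →
      D.pos {i : Ordinal.{0} | i < lam ∧ ∀ b, b < d → i ∈ (c b).1} →
      ∃ y ∈ K, y.1 ⊆ {i : Ordinal.{0} | i < lam ∧ ∀ b, b < d → i ∈ (c b).1} ∧
        ∀ b, b < d → ∀ i, i ∈ (c b).1 → i ∈ y.1 → P.le ((c b).2 i) (y.2 i))) ∧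
  (∀ (q : P.Cond) (τ : SetName P), IsSetName P τ → ForcesPos P D q τ →
      ∃ x ∈ K, (∀ i ∈ x.1, P.le q (x.2 i)) ∧ ForcesSubset P q (tauOf P x) τ) ∧
  ((Set.Iio lam, fun _ : Ordinal.{0} => P.one) ∈ K)

/-- The principle `(*)⁴_{D,K,Q}`. -/
def StarFour {lam : Ordinal.{0}} (P : ForcingNotion) (D : NormalFilterOn lam)
    (K : Set (PSeq P)) (kappa : Ordinal.{0}) : Prop :=
  StarThree P D K kappa ∧ ∀ x ∈ K, ∀ i ∈ x.1, ForcesPos P D (x.2 i) (tauOf P x)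

/-- The principle `(*)⁶_{D,K,Q}` of Proposition 1.11. -/
def StarSix {lam : Ordinal.{0}} (P : ForcingNotion) (D : NormalFilterOn lam)
    (K : Set (PSeq P)) : Prop :=
  (∀ x ∈ K, D.pos x.1) ∧
  (∀ (q : P.Cond) (T : Set Ordinal.{0}), D.pos T →
      ∃ x ∈ K, (∀ i, P.le q (x.2 i)) ∧ x.1 ⊆ T) ∧
  (∀ x ∈ K, ∀ i ∈ x.1, ForcesPos P D (x.2 i) (tauOf P x)) ∧
  (∀ x ∈ K, ∀ T', T' ⊆ x.1 → D.pos T' → ∀ qf : Ordinal.{0} → P.Cond,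
      (∀ i ∈ T', P.le (x.2 i) (qf i)) →
      ∃ y ∈ K, y.1 ⊆ T' ∧ ∀ i ∈ y.1, P.le (qf i) (y.2 i)) ∧
  (∀ (q : P.Cond) (τ : SetName P), IsSetName P τ → ForcesPos P D q τ →
      ∃ x ∈ K, (∀ i ∈ x.1, P.le q (x.2 i)) ∧ ForcesSubset P q (tauOf P x) τ) ∧
  ((Set.Iio lam, fun _ : Ordinal.{0} => P.one) ∈ K)

def Incompatible (P : ForcingNotion) (p q : P.Cond) : Prop := ¬ ∃ r, P.le p r ∧ P.le q r

/-- `P` satisfies the `lam`-c.c. -/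
def LamCC (P : ForcingNotion) (lam : Ordinal.{0}) : Prop :=
  ∀ A : Set P.Cond, (∀ p ∈ A, ∀ q ∈ A, p ≠ q → Incompatible P p q) → SizeLT A lam

/-- The principle `(*)⁷_{D,K,D₁,Q}` of Proposition 1.12. -/
def StarSeven {lam : Ordinal.{0}} (P : ForcingNotion) (D D1 : NormalFilterOn lam)
    (K : Set (PSeq P)) (kappa : Ordinal.{0}) : Prop :=
  (StarSix P D K ∨ StarThree P D K kappa) ∧
  ((∀ x ∈ K, D1.pos {d : Ordinal.{0} | d < lam ∧ ForcesStatIn P P.one (tauOf P x) d}) ∨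
   ((∀ x ∈ K, D1.pos {d : Ordinal.{0} | d < lam ∧ ¬ ForcesNonstatIn P P.one (tauOf P x) d}) ∧
     LamCC P lam))

/-- The principle `C_{D,D₁}` of Proposition 1.12. -/
def CDPrinciple {lam : Ordinal.{0}} (D D1 : NormalFilterOn lam) : Prop :=
  ∀ T, D.pos T → D1.pos {d : Ordinal.{0} | d < lam ∧ StatIn T d}

/-! ## The Levy collapse `Col(μ,<λ)` -/

structure IsLevyCond (mu lam : Ordinal.{0}) (f : Set (Ordinal.{0} × Ordinal.{0} × Ordinal.{0})) : Prop where
  func : ∀ a x b b', (a, x, b) ∈ f → (a, x, b') ∈ f → b = b'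
  dom_lt : ∀ a x b, (a, x, b) ∈ f → a < lam ∧ x < mu
  val_lt : ∀ a x b, (a, x, b) ∈ f → b < a
  small : f = ∅ ∨ SizeLT f mu

/-- The Levy collapse `Col(mu, <lam)`:  partial functions of size `< mu` on
`lam × mu` with `p(a,x) < a`, ordered by extension. -/
def LevyCollapse (mu lam : Ordinal.{0}) : ForcingNotion where
  Cond := {f : Set (Ordinal.{0} × Ordinal.{0} × Ordinal.{0}) // IsLevyCond mu lam f}
  le f g := f.1 ⊆ g.1
  le_refl _ := subset_rfl
  le_trans h1 h2 := h1.trans h2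
  one := ⟨∅, { func := fun _ _ _ _ h => absurd h (Set.notMem_empty _),
               dom_lt := fun _ _ _ h => absurd h (Set.notMem_empty _),
               val_lt := fun _ _ _ h => absurd h (Set.notMem_empty _),
               small := Or.inl rfl }⟩
  one_le _ := Set.empty_subset _

/-! ## Forcing with the positive sets of an ideal;  precipitousness
(well-foundedness of generic ultrapowers) and closure of generic ultrapowers -/

/-- Forcing with the `Pos`-positive subsets of `T`, ordered by inclusion. -/
def PosForcing (Pos : Set (Set Ordinal.{0})) (T : Set Ordinal.{0}) : ForcingNotion where
  Cond := {A : Set Ordinal.{0} // A = T ∨ (A ∈ Pos ∧ A ⊆ T)}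
  le A B := B.1 ⊆ A.1
  le_refl _ := subset_rfl
  le_trans h1 h2 := h2.trans h1
  one := ⟨T, Or.inl rfl⟩
  one_le p := by
    rcases p.2 with h | h
    · exact h.subset
    · exact h.2

/-- A name for an element of the generic ultrapower: a name of a ground-model
function (on ordinals). -/
def FnName (P : ForcingNotion) : Type 1 := (Ordinal.{0} → Ordinal.{0}) → Set P.Cond

def IsFnNameAbove (P : ForcingNotion) (q : P.Cond) (N : FnName P) : Prop :=
  (∀ g p r, p ∈ N g → P.le p r → r ∈ N g) ∧
  (∀ r, P.le q r → ∃ s, P.le r s ∧ ∃ g, s ∈ N g) ∧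
  (∀ g g' s, s ∈ N g → s ∈ N g' → g = g')

/-- The ideal with positive sets `Pos` (on the underlying set `T`) is
precipitous: no condition forces an infinite descending sequence in the
generic ultrapower. -/
def IdealPrecipitous (Pos : Set (Set Ordinal.{0})) (T : Set Ordinal.{0}) : Prop :=
  ¬ ∃ (q : (PosForcing Pos T).Cond) (N : ℕ → FnName (PosForcing Pos T)),
      (∀ n, IsFnNameAbove (PosForcing Pos T) q (N n)) ∧
      ∀ n, ∀ r, (PosForcing Pos T).le q r → ∃ s, (PosForcing Pos T).le r s ∧
        ∃ g g' : Ordinal.{0} → Ordinal.{0}, s ∈ N n g ∧ s ∈ N (n + 1) g' ∧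
          (s.1 ∩ {a : Ordinal.{0} | ¬ g' a < g a}) ∉ Pos

/-- The (well-founded) generic ultrapower is closed under sequences of length
`< kappa` of its elements in the generic extension. -/
def IdealUltraClosed (Pos : Set (Set Ordinal.{0})) (T : Set Ordinal.{0}) (kappa : Ordinal.{0}) : Prop :=
  ∀ (q : (PosForcing Pos T).Cond) (d : Ordinal.{0}), d < kappa →
    ∀ N : Ordinal.{0} → FnName (PosForcing Pos T),
      (∀ x, x < d → IsFnNameAbove (PosForcing Pos T) q (N x)) →
      ∀ r, (PosForcing Pos T).le q r → ∃ s, (PosForcing Pos T).le r s ∧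
        ∃ F : Ordinal.{0} → Ordinal.{0} → Ordinal.{0},
          ∀ x, x < d → ∀ t, (PosForcing Pos T).le s t →
            ∃ u, (PosForcing Pos T).le t u ∧ ∃ g, u ∈ N x g ∧
              (u.1 ∩ {a : Ordinal.{0} | F a x ≠ g a}) ∉ Pos

/-- Forcing with the positive sets preserves the cardinal `nu`. -/
def IdealPreservesCardinal (Pos : Set (Set Ordinal.{0})) (T : Set Ordinal.{0}) (nu : Ordinal.{0}) : Prop :=
  PreservesCardinalForced (PosForcing Pos T) nu

/-- The ideal is `nu`-preserving: precipitous, and forcing with the positive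
sets preserves the cardinal `nu` (Definition 1.4). -/
def IdealKappaPreserving (Pos : Set (Set Ordinal.{0})) (T : Set Ordinal.{0}) (nu : Ordinal.{0}) : Prop :=
  IdealPrecipitous Pos T ∧ IdealPreservesCardinal Pos T nu

/-! ## The nonstationary ideal and its cofinality restrictions -/

/-- The `NS_lam`-positive sets: the stationary subsets of `lam`. -/
def NSPos (lam : Ordinal.{0}) : Set (Set Ordinal.{0}) := {A | A ⊆ Set.Iio lam ∧ StatIn A lam}

def cofSet (lam : Ordinal.{0}) (m : Cardinal) : Set Ordinal.{0} := {x | x < lam ∧ x.cof = m}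

/-- The `NS_lam^m`-positive sets: stationary sets concentrating on cofinality `m`. -/
def NSPosCof (lam : Ordinal.{0}) (m : Cardinal) : Set (Set Ordinal.{0}) :=
  {A | A ⊆ cofSet lam m ∧ StatIn A lam}

/-! ## Repeat points and (abstract) core-model data -/

/-- `δ` is an up-repeat point for the sequence `⟨F β : β < γ⟩` (Definition 2.0(a)). -/
def IsUpRepeatPoint (F : Ordinal.{0} → Set (Set Ordinal.{0})) (γ δ : Ordinal.{0}) : Prop :=
  δ < γ ∧ ∀ A ∈ F δ, ∃ δ', δ < δ' ∧ δ' < γ ∧ A ∈ F δ'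

/-- `δ` is a `(lam, ρ)`-repeat point for `⟨F β : β < γ⟩` (Definition 2.0(b)). -/
def IsRepeatPoint (F : Ordinal.{0} → Set (Set Ordinal.{0})) (γ : Ordinal.{0}) (lam : Cardinal)
    (ρ δ : Ordinal.{0}) : Prop :=
  δ < γ ∧ δ.cof = lam ∧ ∀ A : Set Ordinal.{0},
    (∀ b, δ ≤ b → b < δ + ρ → A ∈ F b) →
    ∀ c, c < δ → ∃ ξ, c ≤ ξ ∧ ξ < δ ∧ ∀ ξ', ξ ≤ ξ' → ξ' < ξ + ρ → A ∈ F ξ'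

/-- `U` is a normal ultrafilter over `a`. -/
def IsNormalUltrafilterOn (a : Ordinal.{0}) (U : Set (Set Ordinal.{0})) : Prop :=
  (∃ D : NormalFilterOn a, D.sets = U) ∧
  ∀ X, X ⊆ Set.Iio a → X ∈ U ∨ (Set.Iio a \ X) ∈ U

/-- Abstract data for (the maximal sequence of measures `F⃗` of) the core model
`K(F⃗)`: the Mitchell order `o`, the measure sequence `seq`, and the predicate
"regular in `K(F⃗)`". -/
structure CoreModelData where
  o : Ordinal.{0} → Ordinal.{0}
  seq : Ordinal.{0} → Ordinal.{0} → Set (Set Ordinal.{0})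
  regularIn : Ordinal.{0} → Prop

/-!
If the conclusion failed, the set `B` of those `i ∈ T` for which `p_i` does not force
`τ_p̄ ∈ (D^Q)⁺` would be positive, and each `i ∈ B` would have an extension `r_i` of `p_i` and a
`C_i ∈ D` such that `r_i ⊩ τ_p̄ ∩ C_i = ∅`. For `i < j` in the positive set `B ∩ Δ_i C_i` we have
`j ∈ C_i`, so `r_i ⊥ p_j` and hence `r_i ⊥ r_j`: an antichain of size `λ`, against the `λ`-c.c.

The `λ`-c.c. of `Col(μ,<λ)`: take conditions `f δ` for `δ < λ`. If every trace
`f δ ∩ (δ × μ × δ)` occurred only for `δ` below some bound `h t < λ`, then, as there are fewer than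
`λ` traces below each `γ < λ`, `γ ↦ sup_t h t` would have a closure point `δ` of cofinality `μ`;
but the trace of `f δ` lies below some `γ < δ`, so `δ ≤ h t < δ`. Hence some trace occurs
unboundedly often, and two conditions with the same trace, the second indexed above the support
of the first, are compatible.
-/

open Ordinal

section Size

variable {α : Type 1} {A : Set α}

theorem sizeLE_iff_mk_le {b : Ordinal.{0}} : SizeLE A b ↔ #A ≤ Cardinal.lift b.card := by
  classical
  rw [← Cardinal.mk_Iio_ordinal]
  constructor
  · rintro ⟨g, hg, hinj⟩
    refine Cardinal.mk_le_of_injective (f := fun x : A => (⟨g x, hg x x.2⟩ : Iio b)) ?_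
    intro x y hxy
    exact Subtype.ext (hinj x x.2 y y.2 (congrArg Subtype.val hxy))
  · rintro ⟨e⟩
    refine ⟨fun x => if hx : x ∈ A then (e ⟨x, hx⟩).1 else 0, fun x hx => ?_,
      fun x hx y hy hxy => ?_⟩
    · simp only [hx, dif_pos]
      exact (e ⟨x, hx⟩).2
    · simp only [hx, hy, dif_pos] at hxy
      simpa using e.injective (Subtype.ext hxy)

theorem sizeLT_ord_iff {κ : Cardinal.{0}} : SizeLT A κ.ord ↔ #A < Cardinal.lift κ := by
  constructor
  · rintro ⟨b, hb, hA⟩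
    exact (sizeLE_iff_mk_le.1 hA).trans_lt (Cardinal.lift_lt.2 (Cardinal.lt_ord.1 hb))
  · intro h
    obtain ⟨c, hc⟩ := Cardinal.mem_range_lift_of_le h.le
    rw [← hc, Cardinal.lift_lt] at h
    exact ⟨c.ord, Cardinal.ord_lt_ord.2 h, by rw [sizeLE_iff_mk_le, Cardinal.card_ord, hc]⟩

end Size

namespace NormalFilterOn

variable {lam : Ordinal.{0}} {D : NormalFilterOn lam} {A C : Set Ordinal.{0}}

theorem Iio_mem (h : 0 < lam) : Iio lam ∈ D.sets :=
  D.superset_mem _ (D.tail_mem 0 h) _ subset_rfl fun _ hx => hx.2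

theorem pos.inter_nonempty (hA : D.pos A) (hC : C ∈ D.sets) : (A ∩ C).Nonempty := by
  by_contra h
  refine hA.2 (D.superset_mem C hC _ sdiff_subset fun x hx => ⟨D.subset_field C hC hx, ?_⟩)
  exact fun hxA => h ⟨x, hxA, hx⟩

theorem pos.inter_mem (hA : D.pos A) (hC : C ∈ D.sets) : D.pos (A ∩ C) := by
  refine ⟨inter_subset_left.trans hA.1, fun h => hA.2 ?_⟩
  refine D.superset_mem _ (D.inter_mem _ h C hC) _ sdiff_subset ?_
  rintro x ⟨⟨hx, hxAC⟩, hxC⟩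
  exact ⟨hx, fun hxA => hxAC ⟨hxA, hxC⟩⟩

theorem pos.exists_gt (hA : D.pos A) {b : Ordinal.{0}} (hb : Order.succ b < lam) :
    ∃ i ∈ A, b < i := by
  obtain ⟨i, hiA, hbi, -⟩ := hA.inter_nonempty (D.tail_mem _ hb)
  exact ⟨i, hiA, Order.succ_le_iff.1 hbi⟩

end NormalFilterOn

theorem NormalFilterOn.pos.lift_le_mk {κ : Cardinal.{0}} (hκ : κ.IsRegular)
    {D : NormalFilterOn κ.ord} {A : Set Ordinal.{0}} (hA : D.pos A) : Cardinal.lift κ ≤ #A := by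
  by_contra! h
  have hbdd : BddAbove A := ⟨κ.ord, fun i hi => (hA.1 hi).le⟩
  have hsup : sSup A < κ.ord := by
    refine Ordinal.sSup_lt_of_lt_cof ?_ hA.1
    rwa [← Ordinal.lift_cof, hκ.cof_ord]
  obtain ⟨i, hi, hlt⟩ := hA.exists_gt ((Cardinal.isSuccLimit_ord hκ.aleph0_le).succ_lt hsup)
  exact hlt.not_ge (le_csSup hbdd hi)

section Forcing

variable {P : ForcingNotion}

theorem Incompatible.symm {p q : P.Cond} (h : Incompatible P p q) : Incompatible P q p :=
  fun ⟨r, hpr, hqr⟩ => h ⟨r, hqr, hpr⟩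

theorem not_incompatible_self (p : P.Cond) : ¬ Incompatible P p p :=
  fun h => h ⟨p, P.le_refl p, P.le_refl p⟩

theorem LamCC.exists_compatible {κ : Cardinal.{0}} (hκ : κ.IsRegular) (hcc : LamCC P κ.ord)
    {D : NormalFilterOn κ.ord} {S : Set Ordinal.{0}} (hS : D.pos S) (r : Ordinal.{0} → P.Cond) :
    ∃ i ∈ S, ∃ j ∈ S, i < j ∧ ¬ Incompatible P (r i) (r j) := by
  by_contra! h
  have hne : ∀ i ∈ S, ∀ j ∈ S, i ≠ j → Incompatible P (r i) (r j) := by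
    intro i hi j hj hij
    rcases hij.lt_or_gt with hij | hji
    exacts [h i hi j hj hij, (h j hj i hi hji).symm]
  have hinj : InjOn r S := fun i hi j hj hrij => by
    by_contra hij
    exact not_incompatible_self (r j) (hrij ▸ hne i hi j hj hij)
  have hanti : ∀ p ∈ r '' S, ∀ q ∈ r '' S, p ≠ q → Incompatible P p q := by
    rintro _ ⟨i, hi, rfl⟩ _ ⟨j, hj, rfl⟩ hpq
    exact hne i hi j hj (fun hij => hpq (hij ▸ rfl))
  have hsmall := sizeLT_ord_iff.1 (hcc _ hanti)
  rw [Cardinal.mk_image_eq_of_injOn r S hinj] at hsmall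
  exact hsmall.not_ge (hS.lift_le_mk hκ)

theorem forcesMem_tauOf {T : Set Ordinal.{0}} {p : Ordinal.{0} → P.Cond} {j : Ordinal.{0}}
    (hj : j ∈ T) {s : P.Cond} (hs : P.le (p j) s) : ForcesMem P s (tauOf P (T, p)) j :=
  fun t hst => ⟨t, P.le_refl t, hj, P.le_trans hs hst⟩

theorem exists_mem_forcesPos_tauOf_of_lamCC {κ : Cardinal.{0}} (hκ : κ.IsRegular)
    (hcc : LamCC P κ.ord) (D : NormalFilterOn κ.ord) {T : Set Ordinal.{0}}
    (hT : T ⊆ Iio κ.ord) (p : Ordinal.{0} → P.Cond) :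
    ∃ C ∈ D.sets, ∀ i ∈ T ∩ C, ForcesPos P D (p i) (tauOf P (T, p)) := by
  set B := {i ∈ T | ¬ ForcesPos P D (p i) (tauOf P (T, p))}
  refine ⟨Iio κ.ord \ B, ?_, fun i hi => not_not.1 fun h => hi.2.2 ⟨hi.1, h⟩⟩
  by_contra hB
  have hBpos : D.pos B := ⟨fun i hi => hT hi.1, hB⟩
  have hwit : ∀ i, ∃ C ∈ D.sets, ∃ r, i ∈ B → P.le (p i) r ∧
      ∀ s, P.le r s → ∀ j ∈ C, ¬ ForcesMem P s (tauOf P (T, p)) j := by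
    intro i
    by_cases hi : i ∈ B
    · obtain ⟨C, hC, r, hpr, hr⟩ : ∃ C ∈ D.sets, ∃ r, P.le (p i) r ∧
          ∀ s, P.le r s → ∀ j ∈ C, ¬ ForcesMem P s (tauOf P (T, p)) j := by
        simpa [ForcesPos] using hi.2
      exact ⟨C, hC, r, fun _ => ⟨hpr, hr⟩⟩
    · exact ⟨_, D.Iio_mem hκ.ord_pos, P.one, fun h => absurd h hi⟩
  choose C hC r hr using hwit
  have hincomp : ∀ i ∈ B, ∀ j ∈ B, j ∈ C i → Incompatible P (r i) (r j) := by
    rintro i hi j hj hji ⟨s, his, hjs⟩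
    exact (hr i hi).2 s his j hji (forcesMem_tauOf hj.1 (P.le_trans (hr j hj).1 hjs))
  obtain ⟨i, ⟨hiB, -⟩, j, ⟨hjB, -, hjC⟩, hij, hcomp⟩ :=
    hcc.exists_compatible hκ (hBpos.inter_mem (D.diagonal C fun i _ => hC i)) r
  exact hcomp (hincomp i hiB j hjB (hjC i hij))

end Forcing

theorem Ordinal.exists_lt_of_mk_lt_cof {s : Set Ordinal.{0}} {δ : Ordinal.{0}}
    (hs : #s < Cardinal.lift δ.cof) (h : ∀ i ∈ s, i < δ) : ∃ γ < δ, ∀ i ∈ s, i < γ := by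
  rw [Ordinal.lift_cof] at hs
  refine ⟨_, Ordinal.sSup_add_one_lt_of_lt_cof hs h, fun i hi => ?_⟩
  refine (Order.lt_add_one_iff.2 le_rfl).trans_le (le_csSup ⟨δ, ?_⟩ (mem_image_of_mem _ hi))
  rintro _ ⟨j, hj, rfl⟩
  exact Order.add_one_le_iff.2 (h j hj)

theorem Cardinal.IsRegular.lift_mk_Iio_lt_cof {lam : Cardinal.{0}} (hlam : lam.IsRegular)
    {β : Ordinal.{0}} (hβ : β < lam.ord) :
    Cardinal.lift.{0} #(Iio β) < (Ordinal.lift.{1} lam.ord).cof := by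
  rw [← Ordinal.lift_cof, hlam.cof_ord, Cardinal.mk_Iio_ordinal, Cardinal.lift_uzero,
    Cardinal.lift_lt]
  exact Cardinal.lt_ord.1 hβ

theorem exists_closurePoint_cof_eq {mu lam : Cardinal.{0}} (hmu : mu.IsRegular)
    (hlam : lam.IsRegular) (hml : mu < lam) {Φ : Ordinal.{0} → Ordinal.{0}}
    (hΦ : ∀ b < lam.ord, Φ b < lam.ord) : ∃ δ < lam.ord, δ.cof = mu ∧ ∀ b < δ, Φ b < δ := by
  set Z := {σ : Ordinal.{0} | ∀ b < σ, b < lam.ord → Φ b < σ}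
  have hZ : ¬ BddAbove Z := by
    refine not_bddAbove_iff.2 fun a => ⟨max a lam.ord + 1, fun b _ hb => ?_, ?_⟩
    · exact (hΦ b hb).trans_le ((le_max_right _ _).trans le_self_add)
    · exact (le_max_left _ _).trans_lt (Order.lt_add_one_iff.2 le_rfl)
  have hclosed : ∀ t ⊆ Z, t.Nonempty → BddAbove t → sSup t ∈ Z := by
    intro t htZ hne hbdd b hb hblam
    obtain ⟨σ, hσ, hbσ⟩ := (lt_csSup_iff hbdd hne).1 hb
    exact (htZ hσ b hbσ hblam).trans_le (le_csSup hbdd hσ)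
  -- `nfp` of `β ↦ sup_{b < β} (Φ b + 1)` is a closure point of `Φ`
  have hcofinal : ∀ β < lam.ord, ∃ σ ∈ Z, β < σ ∧ σ < lam.ord := by
    intro β hβ
    set g : Ordinal.{0} → Ordinal.{0} := fun β => ⨆ b : Iio β, Φ b + 1
    have hg : ∀ β < lam.ord, g β < lam.ord := fun β hβ =>
      Ordinal.lift_iSup_lt_of_lt_cof (hlam.lift_mk_Iio_lt_cof hβ) fun b =>
        (Cardinal.isSuccLimit_ord hlam.aleph0_le).add_one_lt (hΦ b (b.2.trans hβ))
    refine ⟨nfp g (β + 1), fun b hb _ => ?_,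
      (Order.lt_add_one_iff.2 le_rfl).trans_le (le_nfp g _),
      nfp_lt_ord ?_ hg ((Cardinal.isSuccLimit_ord hlam.aleph0_le).add_one_lt hβ)⟩
    · obtain ⟨n, hn⟩ := lt_nfp_iff.1 hb
      calc Φ b < Φ b + 1 := Order.lt_add_one_iff.2 le_rfl
        _ ≤ g (g^[n] (β + 1)) := Ordinal.le_iSup (fun b : Iio _ => Φ b + 1) ⟨b, hn⟩
        _ = g^[n + 1] (β + 1) := (Function.iterate_succ_apply' g n _).symm
        _ ≤ nfp g (β + 1) := iterate_le_nfp g _ _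
    · rw [hlam.cof_ord]
      exact hmu.aleph0_le.trans_lt hml
  have henum : ∀ ξ < lam.ord, enumOrd Z ξ < lam.ord := by
    intro ξ
    induction ξ using WellFoundedLT.induction with
    | _ ξ ih =>
      intro hξ
      obtain ⟨σ, hσ, hsupσ, hσlam⟩ := hcofinal _ (Ordinal.lift_iSup_lt_of_lt_cof
        (hlam.lift_mk_Iio_lt_cof hξ) fun η : Iio ξ => ih η η.2 (η.2.trans hξ))
      refine (enumOrd_le_of_forall_lt hσ fun η hη => ?_).trans_lt hσlam
      exact (Ordinal.le_iSup (fun η : Iio ξ => enumOrd Z η) ⟨η, hη⟩).trans_lt hsupσ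
  have hδ := henum _ (Cardinal.ord_lt_ord.2 hml)
  refine ⟨enumOrd Z mu.ord, hδ, ?_, fun b hb => enumOrd_mem hZ _ b hb (hb.trans hδ)⟩
  rw [cof_map_of_isNormal (isNormal_enumOrd hclosed hZ) (Cardinal.isSuccLimit_ord hmu.aleph0_le),
    hmu.cof_ord]

theorem Cardinal.IsInaccessible.lift_mk_powerset_prod_lt_cof {mu lam : Cardinal.{0}}
    (hlam : lam.IsInaccessible) (hml : mu < lam) {γ : Ordinal.{0}} (hγ : γ < lam.ord) :
    Cardinal.lift.{0} #(𝒫 (Iio γ ×ˢ Iio mu.ord ×ˢ Iio γ)) < (Ordinal.lift.{1} lam.ord).cof := by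
  have hγ' : γ.card < lam := Cardinal.lt_ord.1 hγ
  rw [← Ordinal.lift_cof, hlam.isRegular.cof_ord, Cardinal.lift_uzero, Cardinal.mk_powerset,
    Cardinal.mk_setProd, Cardinal.mk_setProd, Cardinal.mk_Iio_ordinal, Cardinal.mk_Iio_ordinal,
    Cardinal.card_ord, ← Cardinal.lift_mul, ← Cardinal.lift_mul, ← Cardinal.lift_two_power,
    Cardinal.lift_lt]
  have hal := hlam.aleph0_lt.le
  exact hlam.isStrongPrelimit
    (Cardinal.mul_lt_of_lt hal hγ' (Cardinal.mul_lt_of_lt hal hml hγ'))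

section Levy

variable {mu lam : Cardinal.{0}} {c d : Set (Ordinal.{0} × Ordinal.{0} × Ordinal.{0})}

theorem IsLevyCond.mk_lt (hmu : mu ≠ 0) (hc : IsLevyCond mu.ord lam.ord c) :
    #c < Cardinal.lift mu := by
  rcases hc.small with rfl | hc
  · simpa using pos_iff_ne_zero.2 hmu
  · exact sizeLT_ord_iff.1 hc

theorem IsLevyCond.union (hmu : ℵ₀ ≤ mu) (hc : IsLevyCond mu.ord lam.ord c)
    (hd : IsLevyCond mu.ord lam.ord d)
    (hcd : ∀ a x b b', (a, x, b) ∈ c → (a, x, b') ∈ d → b = b') :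
    IsLevyCond mu.ord lam.ord (c ∪ d) where
  func a x b b' h h' := by
    rcases h with h | h <;> rcases h' with h' | h'
    exacts [hc.func a x b b' h h', hcd a x b b' h h', (hcd a x b' b h' h).symm,
      hd.func a x b b' h h']
  dom_lt a x b h := h.elim (hc.dom_lt a x b) (hd.dom_lt a x b)
  val_lt a x b h := h.elim (hc.val_lt a x b) (hd.val_lt a x b)
  small := Or.inr <| sizeLT_ord_iff.2 <| (Cardinal.mk_union_le c d).trans_lt <|
    Cardinal.add_lt_of_lt (by simpa using hmu) (hc.mk_lt (Cardinal.aleph0_pos.trans_le hmu).ne')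
      (hd.mk_lt (Cardinal.aleph0_pos.trans_le hmu).ne')

theorem LevyCollapse.compatible_of_agree (hmu : ℵ₀ ≤ mu)
    {p q : (LevyCollapse mu.ord lam.ord).Cond}
    (hpq : ∀ a x b b', (a, x, b) ∈ p.1 → (a, x, b') ∈ q.1 → b = b') :
    ¬ Incompatible (LevyCollapse mu.ord lam.ord) p q :=
  fun h => h ⟨⟨_, p.2.union hmu q.2 hpq⟩, subset_union_left, subset_union_right⟩

theorem IsLevyCond.exists_fst_lt (hmu : mu ≠ 0) (hc : IsLevyCond mu.ord lam.ord c)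
    {δ : Ordinal.{0}} (hδ : mu ≤ δ.cof) : ∃ γ < δ, ∀ w ∈ c, w.1 < δ → w.1 < γ := by
  obtain ⟨γ, hγ, h⟩ := Ordinal.exists_lt_of_mk_lt_cof (s := Prod.fst '' {w ∈ c | w.1 < δ})
    (Cardinal.mk_image_le.trans_lt <| (Cardinal.mk_le_mk_of_subset (sep_subset _ _)).trans_lt <|
      (hc.mk_lt hmu).trans_le (Cardinal.lift_le.2 hδ)) (by rintro _ ⟨w, hw, rfl⟩; exact hw.2)
  exact ⟨γ, hγ, fun w hw hwδ => h _ (mem_image_of_mem _ ⟨hw, hwδ⟩)⟩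

theorem LevyCollapse.exists_trace_eq (hmu : mu.IsRegular) (hlam : lam.IsInaccessible)
    (hml : mu < lam) (f : Ordinal.{0} → (LevyCollapse mu.ord lam.ord).Cond) :
    ∃ t, ∀ b < lam.ord, ∃ δ, b < δ ∧ δ < lam.ord ∧ {w ∈ (f δ).1 | w.1 < δ} = t := by
  by_contra! h
  choose bound hbound hne using h
  set Ψ : Ordinal.{0} → Ordinal.{0} :=
    fun γ => ⨆ t : 𝒫 (Iio γ ×ˢ Iio mu.ord ×ˢ Iio γ), bound t
  have hΨ : ∀ γ < lam.ord, Ψ γ < lam.ord := fun γ hγ =>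
    Ordinal.lift_iSup_lt_of_lt_cof (hlam.lift_mk_powerset_prod_lt_cof hml hγ) fun t => hbound t
  obtain ⟨δ, hδ, hcof, hclosed⟩ := exists_closurePoint_cof_eq hmu hlam.isRegular hml hΨ
  -- the trace at `δ` lies below some `γ < δ`, so it is one of the traces counted by `Ψ γ < δ`
  obtain ⟨γ, hγ, hfst⟩ := (f δ).2.exists_fst_lt hmu.ne_zero hcof.ge
  have htr : {w ∈ (f δ).1 | w.1 < δ} ∈ 𝒫 (Iio γ ×ˢ Iio mu.ord ×ˢ Iio γ) := by
    rintro w ⟨hw, hwδ⟩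
    have hwγ := hfst w hw hwδ
    exact ⟨hwγ, ((f δ).2.dom_lt _ _ _ hw).2, ((f δ).2.val_lt _ _ _ hw).trans hwγ⟩
  have hbdd : BddAbove (range fun t : 𝒫 (Iio γ ×ˢ Iio mu.ord ×ˢ Iio γ) => bound t) :=
    ⟨lam.ord, by rintro _ ⟨t, rfl⟩; exact (hbound t).le⟩
  exact hne _ δ ((le_ciSup hbdd ⟨_, htr⟩).trans_lt (hclosed γ hγ)) hδ rfl

theorem LevyCollapse.exists_agree (hmu : mu.IsRegular) (hlam : lam.IsInaccessible)
    (hml : mu < lam) (f : Ordinal.{0} → (LevyCollapse mu.ord lam.ord).Cond) :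
    ∃ i j, i < j ∧ j < lam.ord ∧
      ∀ a x b b', (a, x, b) ∈ (f i).1 → (a, x, b') ∈ (f j).1 → b = b' := by
  obtain ⟨t, ht⟩ := exists_trace_eq hmu hlam hml f
  obtain ⟨i, -, hi, hti⟩ := ht 0 hlam.isRegular.ord_pos
  obtain ⟨ρ, hρ, hfst⟩ := (f i).2.exists_fst_lt (δ := lam.ord) hmu.ne_zero
    (by rw [hlam.isRegular.cof_ord]; exact hml.le)
  obtain ⟨j, hij, hj, htj⟩ := ht (max i ρ) (max_lt hi hρ)
  refine ⟨i, j, (le_max_left _ _).trans_lt hij, hj, fun a x b b' hb hb' => ?_⟩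
  have ha : a < j :=
    (hfst _ hb ((f i).2.dom_lt _ _ _ hb).1).trans ((le_max_right _ _).trans_lt hij)
  have hb'i : (a, x, b') ∈ {w ∈ (f i).1 | w.1 < i} := by
    rw [hti, ← htj]
    exact ⟨hb', ha⟩
  exact (f i).2.func a x b b' hb hb'i.1

theorem levyCollapse_lamCC (hmu : mu.IsRegular) (hlam : lam.IsInaccessible) (hml : mu < lam) :
    LamCC (LevyCollapse mu.ord lam.ord) lam.ord := by
  intro A hA
  rw [sizeLT_ord_iff]
  by_contra! hle
  obtain ⟨e⟩ := (Cardinal.le_def (Iio lam.ord) A).1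
    (by rwa [Cardinal.mk_Iio_ordinal, Cardinal.card_ord])
  set f : Ordinal.{0} → (LevyCollapse mu.ord lam.ord).Cond :=
    fun δ => if h : δ < lam.ord then e ⟨δ, h⟩ else (LevyCollapse mu.ord lam.ord).one
  have hf : ∀ δ (h : δ < lam.ord), f δ = e ⟨δ, h⟩ := fun δ h => dif_pos h
  obtain ⟨i, j, hij, hj, hagree⟩ := LevyCollapse.exists_agree hmu hlam hml f
  refine LevyCollapse.compatible_of_agree hmu.aleph0_le hagree (hA _ ?_ _ ?_ ?_)
  · exact hf i (hij.trans hj) ▸ (e _).2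
  · exact hf j hj ▸ (e _).2
  · rw [hf i (hij.trans hj), hf j hj]
    exact fun h => hij.ne (congrArg Subtype.val (e.injective (Subtype.ext h)))

end Levy

/-- Lemma 1.13:  Suppose `μ` is regular, `λ > μ` is inaccessible,
`Q = Col(μ,<λ)` and `D` is a normal filter on `λ`.  Let `T ∈ D⁺` and let
`p̄ = ⟨p_i : i ∈ T⟩` be a sequence of conditions in `Q`.  Then there is `C ∈ D`
such that for every `i ∈ T ∩ C`, `p_i ⊩ τ_p̄ ∈ (D^Q)⁺`, where
`τ_p̄ = {i : p_i ∈ G}`. -/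
theorem lemma_1_13 (mu lam : Cardinal) (hmu : mu.IsRegular) (hlam : lam.IsInaccessible)
    (hml : mu < lam)
    (D : NormalFilterOn lam.ord)
    (T : Set Ordinal.{0}) (hT : D.pos T)
    (p : Ordinal.{0} → (LevyCollapse mu.ord lam.ord).Cond) :
    ∃ C ∈ D.sets, ∀ i ∈ T ∩ C,
      ForcesPos (LevyCollapse mu.ord lam.ord) D (p i)
        (tauOf (LevyCollapse mu.ord lam.ord) (T, p)) :=
  exists_mem_forcesPos_tauOf_of_lamCC hlam.isRegular (levyCollapse_lamCC hmu hlam hml) D hT.1 p
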